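/- Let A be a GBI-algebra, a, b ∈ A, and let H be a prime filter of A. Then a·b ∈ H if and only if there exist prime filters F and G of A with a ∈ F, b ∈ G and FG ⊆ H. (In the notation of the duality for GBI-algebras: 𝓕_a ∘ 𝓕_b = 𝓕_{a·b}.) -/

import Mathlib

/-!
Residuation makes multiplication preserve finite joins and `⊥` in each argument. Hence, as `H`
is prime, `{x | x * b ∉ H}` is a lattice ideal missing `a`, and the prime filter theorem for
distributive lattices yields a prime filter `F ∋ a` with `F b ⊆ H`. With `F` fixed,
`{y | ∃ x ∈ F, x * y ∉ H}` is again an ideal (two witnesses are merged by their meet in `F`),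
missing `b`, and the same theorem yields `G`.
-/

/-- A (lattice) filter: a nonempty, upward-closed subset closed under binary
meets. -/
def IsLatticeFilter {A : Type*} [Lattice A] (F : Set A) : Prop :=
  F.Nonempty ∧ (∀ x ∈ F, ∀ y : A, x ≤ y → y ∈ F) ∧ (∀ x ∈ F, ∀ y ∈ F, x ⊓ y ∈ F)

/-- A prime filter: a proper filter such that `x ⊔ y ∈ H` implies `x ∈ H` or
`y ∈ H`. -/
def IsPrimeLatticeFilter {A : Type*} [Lattice A] (H : Set A) : Prop :=
  IsLatticeFilter H ∧ H ≠ Set.univ ∧ ∀ x y : A, x ⊔ y ∈ H → x ∈ H ∨ y ∈ H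

open Order

section PrimeFilters

variable {A : Type*}

section Lattice

variable [Lattice A] {F : Set A}

theorem IsLatticeFilter.mem_of_le (hF : IsLatticeFilter F) {x y : A} (hx : x ∈ F)
    (hxy : x ≤ y) : y ∈ F :=
  hF.2.1 x hx y hxy

theorem IsLatticeFilter.inf_mem (hF : IsLatticeFilter F) {x y : A} (hx : x ∈ F) (hy : y ∈ F) :
    x ⊓ y ∈ F :=
  hF.2.2 x hx y hy

theorem isLatticeFilter_Ici (a : A) : IsLatticeFilter (Set.Ici a) :=
  ⟨Set.nonempty_Ici, fun _ hx _ hxy => le_trans hx hxy, fun _ hx _ hy => le_inf hx hy⟩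

theorem IsPrimeLatticeFilter.bot_notMem [OrderBot A] (hF : IsPrimeLatticeFilter F) : ⊥ ∉ F :=
  fun hbot => hF.2.1 (Set.eq_univ_of_forall fun _ => hF.1.mem_of_le hbot bot_le)

theorem IsPrimeLatticeFilter.mem_or_mem (hF : IsPrimeLatticeFilter F) {x y : A}
    (h : x ⊔ y ∈ F) : x ∈ F ∨ y ∈ F :=
  hF.2.2 x y h

theorem Order.Ideal.IsPrime.isPrimeLatticeFilter_compl {J : Ideal A} (hJ : J.IsPrime) :
    IsPrimeLatticeFilter (J : Set A)ᶜ :=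
  ⟨⟨Set.nonempty_compl.mpr hJ.ne_univ, fun _ hx _ hxy hy => hx (J.lower hxy hy),
      fun _ hx _ hy hxy => (hJ.mem_or_mem hxy).elim hx hy⟩,
    Set.compl_ne_univ.mpr J.nonempty,
    fun _ _ hxy => not_and_or.mp fun h => hxy (Ideal.sup_mem h.1 h.2)⟩

end Lattice

/-- The prime filter theorem, applied to the ideal `{x | ¬ P x}`. -/
theorem exists_isPrimeLatticeFilter_forall [DistribLattice A] [OrderBot A] {P : A → Prop}
    (hmono : Monotone P) (hsup : ∀ x y, P (x ⊔ y) → P x ∨ P y) (hbot : ¬ P ⊥) {a : A}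
    (ha : P a) : ∃ F : Set A, IsPrimeLatticeFilter F ∧ a ∈ F ∧ ∀ x ∈ F, P x := by
  have hI : IsIdeal {x | ¬ P x} :=
    ⟨fun x y hyx hx hy => hx (hmono hyx hy), ⟨⊥, hbot⟩,
      fun x hx y hy => ⟨x ⊔ y, fun h => (hsup x y h).elim hx hy, le_sup_left, le_sup_right⟩⟩
  have hdisj : Disjoint (PFilter.principal a : Set A) hI.toIdeal :=
    Set.disjoint_left.mpr fun x hax hx => hx (hmono hax ha)
  obtain ⟨J, hJ, hIJ, hJa⟩ := DistribLattice.prime_ideal_of_disjoint_filter_ideal hdisj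
  refine ⟨(J : Set A)ᶜ, hJ.isPrimeLatticeFilter_compl,
    Set.disjoint_left.mp hJa (PFilter.mem_principal.mpr le_rfl), fun x hx => ?_⟩
  by_contra hPx
  exact hx (hIJ hPx)

theorem exists_isPrimeLatticeFilter_forall_forall_mem [DistribLattice A] [OrderBot A]
    {m : A → A → A} (hmono : ∀ y, Monotone (m · y))
    (hsup : ∀ x y y', m x (y ⊔ y') = m x y ⊔ m x y') (hbot : ∀ x, m x ⊥ = ⊥)
    {F H : Set A} (hF : IsLatticeFilter F) (hH : IsPrimeLatticeFilter H) {b : A}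
    (hb : ∀ x ∈ F, m x b ∈ H) :
    ∃ G : Set A, IsPrimeLatticeFilter G ∧ b ∈ G ∧ ∀ x ∈ F, ∀ y ∈ G, m x y ∈ H := by
  have hmono' : ∀ x, Monotone (m x) := fun x y y' hyy' => by
    rw [← sup_eq_right.mpr hyy', hsup]
    exact le_sup_left
  set P : A → Prop := fun y => ∀ x ∈ F, m x y ∈ H
  have hPmono : Monotone P := fun y y' hyy' hy x hx => hH.1.mem_of_le (hy x hx) (hmono' x hyy')
  have hPsup : ∀ y y', P (y ⊔ y') → P y ∨ P y' := by
    intro y y' hyy'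
    by_contra h
    simp only [P, not_or, not_forall, exists_prop] at h
    obtain ⟨⟨x, hx, hxy⟩, ⟨x', hx', hxy'⟩⟩ := h
    have hmem := hyy' (x ⊓ x') (hF.inf_mem hx hx')
    rw [hsup] at hmem
    rcases hH.mem_or_mem hmem with h | h
    · exact hxy (hH.1.mem_of_le h (hmono y inf_le_left))
    · exact hxy' (hH.1.mem_of_le h (hmono y' inf_le_right))
  have hPbot : ¬ P ⊥ := fun h => by
    obtain ⟨x, hx⟩ := hF.1
    exact hH.bot_notMem (hbot x ▸ h x hx)
  obtain ⟨G, hG, hbG, hGF⟩ := exists_isPrimeLatticeFilter_forall hPmono hPsup hPbot hb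
  exact ⟨G, hG, hbG, fun x hx y hy => hGF y hy x hx⟩

end PrimeFilters

/-- In a GBI-algebra, for a prime filter `H`: `a·b ∈ H` iff there are prime
filters `F ∋ a`, `G ∋ b` with `FG ⊆ H`.  (In duality notation,
`𝓕_a ∘ 𝓕_b = 𝓕_{a·b}`.) -/
theorem prime_filter_mul_mem_iff {A : Type*} [HeytingAlgebra A] [Monoid A]
    (ldiv rdiv : A → A → A)
    (hld : ∀ x y z : A, x * y ≤ z ↔ y ≤ ldiv x z)
    (hrd : ∀ x y z : A, x * y ≤ z ↔ x ≤ rdiv z y)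
    (a b : A) (H : Set A) (hH : IsPrimeLatticeFilter H) :
    a * b ∈ H ↔
      ∃ F G : Set A, IsPrimeLatticeFilter F ∧ IsPrimeLatticeFilter G ∧
        a ∈ F ∧ b ∈ G ∧ ∀ x ∈ F, ∀ y ∈ G, x * y ∈ H := by
  have hL : ∀ x, GaloisConnection (x * ·) (ldiv x) := fun x y z => hld x y z
  have hR : ∀ y, GaloisConnection (· * y) (rdiv · y) := fun y x z => hrd x y z
  refine ⟨fun hab => ?_, fun ⟨F, G, _, _, haF, hbG, hFG⟩ => hFG a haF b hbG⟩
  obtain ⟨F, hF, haF, hFb⟩ := exists_isPrimeLatticeFilter_forall_forall_mem (m := flip (· * ·))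
    (fun x => (hL x).monotone_l) (fun y _ _ => (hR y).l_sup) (fun y => (hR y).l_bot)
    (isLatticeFilter_Ici b) hH (fun y hby => hH.1.mem_of_le hab ((hL a).monotone_l hby))
  obtain ⟨G, hG, hbG, hFG⟩ := exists_isPrimeLatticeFilter_forall_forall_mem (m := (· * ·))
    (fun y => (hR y).monotone_l) (fun x _ _ => (hL x).l_sup) (fun x => (hL x).l_bot)
    hF.1 hH (fun x hx => hFb b le_rfl x hx)
  exact ⟨F, G, hF, hG, haF, hbG, hFG⟩
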